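/- Assume β + λω_k ≠ 0 for all k = 0,…,N−1. Then for all vectors p, q ∈ ℝ^{2N}, the integral ∫_0^∞ | ⟨ p, e^{tB} G G^⊤ e^{tB^⊤} q ⟩ | dt is finite; consequently the matrix Σ(∞) = ∫_0^∞ e^{tB} G G^⊤ e^{tB^⊤} dt is a well-defined 2N×2N matrix. -/

import Mathlib

/-!
Over `ℂ`, if `A w = ω w` then `(w, 0)` and `(c w, w)`, with `c = -ω / (β + λω)`, are
eigenvectors of `B` with eigenvalues `λω` and `-β`, and `(0, w) = (c w, w) - c (w, 0)`.
For the Fourier modes `w_k = (γ_k ^ n)_n` of `A` we have `ω_k = γ_k - 1`, so `Re (λω_k) < 0`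
unless `k = 0`, and then `c = 0`. As the `w_k` span `ℂ^N` (Vandermonde), `e^{tB}` decays
exponentially on every vector `(0, w)`, i.e. on the range of `G`. The entries of
`e^{tB} G Gᵀ e^{tBᵀ} = (e^{tB} G)(e^{tB} G)ᵀ` therefore decay exponentially and are integrable
on `[0, ∞)`.
-/

open Matrix Complex Finset MeasureTheory

noncomputable section

/-- The N×N matrix with -1 on the diagonal and 1 on the (cyclic) superdiagonal. -/
def ringMat (N : ℕ) : Matrix (Fin N) (Fin N) ℝ :=
  fun n m => if (m : ℕ) = (n : ℕ) then -1 else if (m : ℕ) = ((n : ℕ) + 1) % N then 1 else 0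

/-- γ_k = e^{2πik/N} -/
def gam (N k : ℕ) : ℂ := Complex.exp (2 * Real.pi * Complex.I * k / N)

/-- The 2N×2N real block matrix B = [[λA, A], [0, −β I_N]]. -/
def blockBR (N : ℕ) (lam beta : ℝ) : Matrix (Fin N ⊕ Fin N) (Fin N ⊕ Fin N) ℝ :=
  Matrix.fromBlocks (lam • ringMat N) (ringMat N) 0 (-beta • 1)

/-- The 2N×2N real block matrix G = [[0, 0], [0, σ I_N]]. -/
def blockG (N : ℕ) (σ : ℝ) : Matrix (Fin N ⊕ Fin N) (Fin N ⊕ Fin N) ℝ :=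
  Matrix.fromBlocks 0 0 0 (σ • 1)

open Filter Asymptotics

def ExpDecay {E : Type*} [Norm E] (f : ℝ → E) : Prop :=
  ∃ c > 0, f =O[atTop] fun t => Real.exp (-c * t)

lemma Real.isBigO_exp_neg_mul_of_le {c c' : ℝ} (h : c' ≤ c) :
    (fun t => Real.exp (-c * t)) =O[atTop] fun t => Real.exp (-c' * t) := by
  refine IsBigO.of_bound 1 ?_
  filter_upwards [eventually_ge_atTop 0] with t ht
  simp only [Real.norm_eq_abs, Real.abs_exp, one_mul, Real.exp_le_exp]
  nlinarith

namespace ExpDecay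

section NormedAddCommGroup

variable {E : Type*} [NormedAddCommGroup E] {f g : ℝ → E}

lemma zero : ExpDecay fun _ => (0 : E) := ⟨1, one_pos, isBigO_zero _ _⟩

lemma add (hf : ExpDecay f) (hg : ExpDecay g) : ExpDecay fun t => f t + g t := by
  obtain ⟨c, hc, hfc⟩ := hf
  obtain ⟨d, hd, hgd⟩ := hg
  exact ⟨min c d, lt_min hc hd,
    (hfc.trans (Real.isBigO_exp_neg_mul_of_le (min_le_left c d))).add
      (hgd.trans (Real.isBigO_exp_neg_mul_of_le (min_le_right c d)))⟩

lemma sum {ι : Type*} {s : Finset ι} {f : ι → ℝ → E} (h : ∀ i ∈ s, ExpDecay (f i)) :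
    ExpDecay fun t => ∑ i ∈ s, f i t := by
  classical
  induction s using Finset.induction_on with
  | empty => exact zero
  | insert a s ha ih =>
    simp only [Finset.sum_insert ha]
    exact (h a (mem_insert_self a s)).add (ih fun i hi => h i (mem_insert_of_mem hi))

end NormedAddCommGroup

section NormedRing

variable {R : Type*} [NormedRing R] {f g : ℝ → R}

lemma const_mul (hf : ExpDecay f) (a : R) : ExpDecay fun t => a * f t := by
  obtain ⟨c, hc, hfc⟩ := hf
  exact ⟨c, hc, hfc.const_mul_left a⟩

lemma mul_const (hf : ExpDecay f) (a : R) : ExpDecay fun t => f t * a := by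
  obtain ⟨c, hc, hfc⟩ := hf
  exact ⟨c, hc, (isBigO_of_le' (c := ‖a‖) _ fun t =>
    (norm_mul_le _ _).trans_eq (mul_comm _ _)).trans hfc⟩

lemma mul (hf : ExpDecay f) (hg : ExpDecay g) : ExpDecay fun t => f t * g t := by
  obtain ⟨c, hc, hfc⟩ := hf
  obtain ⟨d, hd, hgd⟩ := hg
  refine ⟨c + d, add_pos hc hd, (hfc.mul hgd).congr_right fun t => ?_⟩
  rw [← Real.exp_add]
  ring_nf

end NormedRing

lemma of_ofReal {f : ℝ → ℝ} (hf : ExpDecay fun t => (f t : ℂ)) : ExpDecay f := by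
  obtain ⟨c, hc, hfc⟩ := hf
  refine ⟨c, hc, isBigO_norm_left.mp ?_⟩
  simpa only [Complex.norm_real] using isBigO_norm_left.mpr hfc

lemma integrableOn_Ici {f : ℝ → ℝ} (hf : ExpDecay f) (hcont : Continuous f) :
    IntegrableOn f (Set.Ici 0) := by
  obtain ⟨c, hc, hfc⟩ := hf
  exact (integrableOn_Ici_iff_integrableOn_Ioi).mpr
    (integrable_of_isBigO_exp_neg hc hcont.continuousOn hfc)

end ExpDecay

lemma expDecay_cexp_mul {μ : ℂ} (hμ : μ.re < 0) :
    ExpDecay fun t : ℝ => Complex.exp (t * μ) := by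
  refine ⟨-μ.re, neg_pos.mpr hμ, isBigO_of_le _ fun t => ?_⟩
  rw [Complex.norm_exp, Real.norm_eq_abs, Real.abs_exp]
  simp [mul_comm]

section MatrixExp

variable {n : Type*} [Fintype n] [DecidableEq n]

lemma Matrix.exp_mulVec_of_mulVec_eq_smul {M : Matrix n n ℂ} {v : n → ℂ} {μ : ℂ}
    (h : M *ᵥ v = μ • v) : NormedSpace.exp M *ᵥ v = Complex.exp μ • v := by
  have hpow (m : ℕ) : M ^ m *ᵥ v = μ ^ m • v := by
    induction m with
    | zero => simp
    | succ m ih => rw [pow_succ', ← mulVec_mulVec, ih, mulVec_smul, h, smul_smul, ← pow_succ]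
  have hM := open scoped Norms.Operator in
    (NormedSpace.exp_series_hasSum_exp' (𝕂 := ℂ) M).map (mulVec.addMonoidHomLeft v)
      (continuous_id.matrix_mulVec continuous_const)
  have hμ := (NormedSpace.exp_series_hasSum_exp' (𝕂 := ℂ) μ).smul_const v
  rw [Complex.exp_eq_exp_ℂ]
  refine hM.unique ?_
  convert hμ using 2 with m
  simp [mulVec.addMonoidHomLeft, smul_mulVec, hpow, smul_smul]

lemma Matrix.map_ofReal_exp (A : Matrix n n ℝ) :
    (NormedSpace.exp A).map ofReal = NormedSpace.exp (A.map ofReal) :=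
  open scoped Norms.Operator in
  NormedSpace.map_exp ofRealHom.mapMatrix (continuous_id.matrix_map continuous_ofReal) A

lemma Matrix.continuous_exp_smul (A : Matrix n n ℝ) :
    Continuous fun t : ℝ => NormedSpace.exp (t • A) := by
  open scoped Norms.Operator in
  exact NormedSpace.exp_continuous.comp (continuous_id.smul continuous_const)

def decayingSubmodule (M : Matrix n n ℂ) : Submodule ℂ (n → ℂ) where
  carrier := {v | ∀ i, ExpDecay fun t : ℝ => (NormedSpace.exp ((t : ℂ) • M) *ᵥ v) i}
  add_mem' {v w} hv hw i := by
    simpa only [mulVec_add, Pi.add_apply] using (hv i).add (hw i)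
  zero_mem' i := by
    simpa only [mulVec_zero, Pi.zero_apply] using ExpDecay.zero
  smul_mem' a v hv i := by
    simpa only [mulVec_smul, Pi.smul_apply, smul_eq_mul] using (hv i).const_mul a

lemma mem_decayingSubmodule_of_mulVec_eq_smul {M : Matrix n n ℂ} {v : n → ℂ} {μ : ℂ}
    (h : M *ᵥ v = μ • v) (hμ : μ.re < 0) : v ∈ decayingSubmodule M := by
  intro i
  have hexp (t : ℝ) : NormedSpace.exp ((t : ℂ) • M) *ᵥ v = Complex.exp (t * μ) • v :=
    exp_mulVec_of_mulVec_eq_smul (by rw [smul_mulVec, h, smul_smul])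
  simpa only [hexp, Pi.smul_apply, smul_eq_mul] using (expDecay_cexp_mul hμ).mul_const (v i)

end MatrixExp

section BlockTriangular

variable {m : Type*} [Fintype m] [DecidableEq m] {A : Matrix m m ℂ} {w : m → ℂ} {ω : ℂ}
  (lam beta : ℂ)

lemma fromBlocks_mulVec_sumElim_zero (hw : A *ᵥ w = ω • w) :
    fromBlocks (lam • A) A 0 (-beta • (1 : Matrix m m ℂ)) *ᵥ Sum.elim w 0
      = (lam * ω) • Sum.elim w 0 := by
  ext (i | i) <;> simp [fromBlocks_mulVec, smul_mulVec, hw, smul_smul]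

lemma fromBlocks_mulVec_sumElim_smul (hw : A *ᵥ w = ω • w) (hden : beta + lam * ω ≠ 0) :
    fromBlocks (lam • A) A 0 (-beta • (1 : Matrix m m ℂ)) *ᵥ
        Sum.elim ((-ω / (beta + lam * ω)) • w) w
      = -beta • Sum.elim ((-ω / (beta + lam * ω)) • w) w := by
  have hc : -ω / (beta + lam * ω) * (beta + lam * ω) = -ω := div_mul_cancel₀ _ hden
  ext (i | i)
  · simp only [fromBlocks_mulVec, Sum.elim_comp_inl, Sum.elim_comp_inr, mulVec_smul,
      smul_mulVec, hw, smul_smul, Sum.elim_inl, Pi.add_apply, Pi.smul_apply, smul_eq_mul]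
    linear_combination w i * hc
  · simp [fromBlocks_mulVec, neg_mulVec, smul_mulVec]

lemma sumElim_zero_mem_decayingSubmodule (hw : A *ᵥ w = ω • w) (hbeta : 0 < beta.re)
    (hω : ω = 0 ∨ (lam * ω).re < 0) (hden : beta + lam * ω ≠ 0) :
    Sum.elim (0 : m → ℂ) w ∈
      decayingSubmodule (fromBlocks (lam • A) A 0 (-beta • (1 : Matrix m m ℂ))) := by
  set c := -ω / (beta + lam * ω)
  have hsplit : Sum.elim (0 : m → ℂ) w = Sum.elim (c • w) w - c • Sum.elim w 0 := by
    ext (i | i) <;> simp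
  rw [hsplit]
  refine sub_mem (mem_decayingSubmodule_of_mulVec_eq_smul
    (fromBlocks_mulVec_sumElim_smul lam beta hw hden) (by simpa using hbeta)) ?_
  rcases hω with rfl | hω
  · simp [c]
  · exact Submodule.smul_mem _ c (mem_decayingSubmodule_of_mulVec_eq_smul
      (fromBlocks_mulVec_sumElim_zero lam beta hw) hω)

end BlockTriangular

lemma ringMat_map_mulVec_powers {N : ℕ} (hN : 2 ≤ N) {z : ℂ} (hz : z ^ N = 1) :
    (ringMat N).map ofReal *ᵥ (fun n : Fin N => z ^ (n : ℕ))
      = (z - 1) • fun n : Fin N => z ^ (n : ℕ) := by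
  ext n
  set n' : Fin N := ⟨((n : ℕ) + 1) % N, Nat.mod_lt _ (by omega)⟩
  have hmod : ((n : ℕ) + 1) % N ≠ n := by
    rcases Nat.lt_or_ge ((n : ℕ) + 1) N with hlt | hge
    · rw [Nat.mod_eq_of_lt hlt]; omega
    · rw [show (n : ℕ) + 1 = N by omega, Nat.mod_self]; omega
  have hne : n ≠ n' := fun h => hmod (congrArg Fin.val h).symm
  rw [mulVec, dotProduct, Fintype.sum_eq_add n n' hne]
  · simp only [map_apply, ringMat, n', hmod, ↓reduceIte, ofReal_neg, ofReal_one, neg_mul,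
      one_mul, ← pow_eq_pow_mod _ hz, pow_succ, Pi.smul_apply, smul_eq_mul]
    ring
  · rintro m ⟨hmn, hmn'⟩
    simp [ringMat, Fin.val_eq_val, hmn, Fin.ext_iff.not.mp hmn', n']

lemma gam_eq_pow (N k : ℕ) : gam N k = Complex.exp (2 * Real.pi * I / N) ^ k := by
  rw [gam, ← Complex.exp_nat_mul]
  congr 1
  ring

lemma gam_pow_eq_one {N : ℕ} (hN : N ≠ 0) (k : ℕ) : gam N k ^ N = 1 := by
  rw [gam_eq_pow, pow_right_comm, (isPrimitiveRoot_exp N hN).pow_eq_one, one_pow]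

lemma span_range_gam_powers {N : ℕ} (hN : N ≠ 0) :
    Submodule.span ℂ (Set.range fun k : Fin N => fun n : Fin N => gam N k ^ (n : ℕ)) = ⊤ := by
  have hinj : Function.Injective fun k : Fin N => gam N k := fun k l h =>
    Fin.ext ((isPrimitiveRoot_exp N hN).pow_inj k.2 l.2 (by simpa only [gam_eq_pow] using h))
  exact (linearIndependent_rows_of_det_ne_zero (det_vandermonde_ne_zero_iff.mpr hinj))
    |>.span_eq_top_of_card_eq_finrank' (by simp)

lemma sub_one_eq_zero_or_re_mul_sub_one_neg {z : ℂ} (hz : ‖z‖ = 1) {lam : ℝ}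
    (hlam : 0 < lam) :
    z - 1 = 0 ∨ ((lam : ℂ) * (z - 1)).re < 0 := by
  rcases eq_or_ne z 1 with rfl | hz1
  · simp
  right
  have hre : z.re < 1 := by
    refine lt_of_le_of_ne (hz ▸ re_le_norm z) fun hre => hz1 (Complex.ext hre ?_)
    simpa using abs_re_eq_norm.mp (by rw [hre, hz, abs_one])
  simpa [Complex.mul_re] using mul_neg_of_pos_of_neg hlam (sub_neg.mpr hre)

lemma blockBR_map_ofReal (N : ℕ) (lam beta : ℝ) :
    (blockBR N lam beta).map ofReal = fromBlocks ((lam : ℂ) • (ringMat N).map ofReal)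
      ((ringMat N).map ofReal) 0 (-(beta : ℂ) • (1 : Matrix (Fin N) (Fin N) ℂ)) := by
  rw [blockBR, fromBlocks_map]
  congr 1 <;> ext i j <;> by_cases h : i = j <;> simp [one_apply, h]

section BlockBR

variable {N : ℕ} {lam beta : ℝ}

lemma sumElim_zero_mem_decayingSubmodule_blockBR (hN : 2 ≤ N) (hlam : 0 < lam) (hbeta : 0 < beta)
    (hinv : ∀ k < N, (beta : ℂ) + lam * (gam N k - 1) ≠ 0) (w : Fin N → ℂ) :
    Sum.elim (0 : Fin N → ℂ) w ∈ decayingSubmodule ((blockBR N lam beta).map ofReal) := by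
  let ι : (Fin N → ℂ) →ₗ[ℂ] (Fin N ⊕ Fin N → ℂ) :=
    (LinearEquiv.sumArrowLequivProdArrow _ _ ℂ ℂ).symm.toLinearMap ∘ₗ LinearMap.inr ℂ _ _
  have hspan : Submodule.span ℂ (Set.range fun k : Fin N => fun n : Fin N => gam N k ^ (n : ℕ))
      ≤ (decayingSubmodule ((blockBR N lam beta).map ofReal)).comap ι := by
    rw [Submodule.span_le, blockBR_map_ofReal]
    rintro _ ⟨k, rfl⟩
    have hk : gam N k ^ N = 1 := gam_pow_eq_one (by omega) k
    exact sumElim_zero_mem_decayingSubmodule _ _ (ringMat_map_mulVec_powers hN hk)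
      (by simpa using hbeta) (sub_one_eq_zero_or_re_mul_sub_one_neg
        (norm_eq_one_of_pow_eq_one hk (by omega)) hlam) (hinv k k.2)
  rw [span_range_gam_powers (by omega)] at hspan
  exact hspan (Submodule.mem_top (x := w))

lemma expDecay_exp_smul_blockBR_apply_inr (hN : 2 ≤ N) (hlam : 0 < lam) (hbeta : 0 < beta)
    (hinv : ∀ k < N, (beta : ℂ) + lam * (gam N k - 1) ≠ 0)
    (i : Fin N ⊕ Fin N) (j : Fin N) :
    ExpDecay fun t : ℝ => NormedSpace.exp (t • blockBR N lam beta) i (Sum.inr j) := by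
  refine ExpDecay.of_ofReal ?_
  have hsingle : Sum.elim (0 : Fin N → ℂ) (Pi.single j 1) = Pi.single (Sum.inr j) 1 := by
    ext (k | k) <;> simp [Pi.single_apply]
  have h := sumElim_zero_mem_decayingSubmodule_blockBR hN hlam hbeta hinv (Pi.single j 1) i
  rw [hsingle] at h
  convert h using 2 with t
  have hsmul : (t : ℂ) • (blockBR N lam beta).map ofReal
      = (t • blockBR N lam beta).map ofReal := by
    ext; simp
  rw [mulVec_single_one, col_apply, hsmul, ← Matrix.map_ofReal_exp, map_apply]

lemma expDecay_exp_smul_blockBR_mul_blockG_apply (hN : 2 ≤ N) (hlam : 0 < lam) (hbeta : 0 < beta)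
    (hinv : ∀ k < N, (beta : ℂ) + lam * (gam N k - 1) ≠ 0)
    (σ : ℝ) (i b : Fin N ⊕ Fin N) :
    ExpDecay fun t : ℝ => (NormedSpace.exp (t • blockBR N lam beta) * blockG N σ) i b := by
  have hG (j : Fin N) : blockG N σ (Sum.inl j) b = 0 := by
    rcases b with b | b <;> rfl
  simp only [mul_apply, Fintype.sum_sum_type, hG, mul_zero, Finset.sum_const_zero, zero_add]
  exact ExpDecay.sum fun j _ =>
    (expDecay_exp_smul_blockBR_apply_inr hN hlam hbeta hinv i j).mul_const _

end BlockBR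

section Gramian

variable {n k : Type*} [Fintype n] [Fintype k] [DecidableEq n]

def gramianIntegrand (B : Matrix n n ℝ) (G : Matrix n k ℝ) (t : ℝ) : Matrix n n ℝ :=
  NormedSpace.exp (t • B) * G * Gᵀ * NormedSpace.exp (t • Bᵀ)

variable {B : Matrix n n ℝ} {G : Matrix n k ℝ}

lemma gramianIntegrand_eq_mul_transpose (t : ℝ) :
    gramianIntegrand B G t
      = (NormedSpace.exp (t • B) * G) * (NormedSpace.exp (t • B) * G)ᵀ := by
  rw [gramianIntegrand, ← transpose_smul, exp_transpose, transpose_mul, Matrix.mul_assoc]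

lemma continuous_gramianIntegrand : Continuous (gramianIntegrand B G) :=
  (((continuous_exp_smul B).matrix_mul continuous_const).matrix_mul continuous_const).matrix_mul
    (continuous_exp_smul Bᵀ)

lemma integrableOn_Ici_gramianIntegrand_apply
    (h : ∀ i b, ExpDecay fun t : ℝ => (NormedSpace.exp (t • B) * G) i b) (i i' : n) :
    IntegrableOn (fun t => gramianIntegrand B G t i i') (Set.Ici 0) := by
  have hdecay : ExpDecay fun t => gramianIntegrand B G t i i' := by
    simp only [gramianIntegrand_eq_mul_transpose, mul_apply, transpose_apply]
    exact ExpDecay.sum fun b _ => (h i b).mul (h i' b)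
  exact hdecay.integrableOn_Ici (continuous_gramianIntegrand.matrix_elem i i')

end Gramian

lemma integrableOn_abs_dotProduct_mulVec {n : Type*} [Fintype n] {M : ℝ → Matrix n n ℝ}
    {s : Set ℝ} (h : ∀ i j, IntegrableOn (fun t => M t i j) s) (p q : n → ℝ) :
    IntegrableOn (fun t => |p ⬝ᵥ M t *ᵥ q|) s := by
  simp only [dotProduct, mulVec]
  exact (integrable_finsetSum _ fun i _ =>
    (integrable_finsetSum _ fun j _ => (h i j).mul_const _).const_mul _).abs

/-- under β + λω_k ≠ 0 for all k, the integral
∫_0^∞ |⟨p, e^{tB} G Gᵀ e^{tBᵀ} q⟩| dt is finite for all p, q ∈ ℝ^{2N}; consequently the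
matrix Σ(∞) = ∫_0^∞ e^{tB} G Gᵀ e^{tBᵀ} dt is well-defined (entrywise integrable). -/
theorem stmt8 (N : ℕ) (hN : 2 ≤ N) (lam beta σ : ℝ) (hlam : 0 < lam) (hbeta : 0 < beta)
    (hinv : ∀ k < N, (beta : ℂ) + lam * (gam N k - 1) ≠ 0) :
    (∀ p q : Fin N ⊕ Fin N → ℝ,
      IntegrableOn
        (fun t : ℝ => |p ⬝ᵥ ((NormedSpace.exp (t • blockBR N lam beta) * blockG N σ *
          (blockG N σ)ᵀ * NormedSpace.exp (t • (blockBR N lam beta)ᵀ)).mulVec q)|)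
        (Set.Ici 0)) ∧
    (∀ i j : Fin N ⊕ Fin N,
      IntegrableOn
        (fun t : ℝ => (NormedSpace.exp (t • blockBR N lam beta) * blockG N σ *
          (blockG N σ)ᵀ * NormedSpace.exp (t • (blockBR N lam beta)ᵀ)) i j)
        (Set.Ici 0)) := by
  have hentries := integrableOn_Ici_gramianIntegrand_apply
    (expDecay_exp_smul_blockBR_mul_blockG_apply hN hlam hbeta hinv σ)
  exact ⟨integrableOn_abs_dotProduct_mulVec hentries, hentries⟩
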